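/- arXiv:1603.06450 — 3 statements merged into one kernel-verified Lean document; each statement's English description precedes it below -/
import Mathlib

section
/- Let G be a countable discrete group and let X be a compact metrizable group on which G acts by continuous automorphisms, with Haar probability measure m_X. If the action of G on (X, m_X) is ergodic, then it is weakly mixing, i.e., the diagonal action of G on (X × X, m_X ⊗ m_X) is ergodic. -/
open MeasureTheory Filter Topology
open scoped ENNReal NNReal BigOperators Classical

namespace SoficPaper

/-- The proportion of indices `j ∈ Fin n` satisfying `P`. -/
noncomputable def prop {n : ℕ} (P : Fin n → Prop) : ℝ :=
  ((Finset.univ.filter P).card : ℝ) / n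

/-- A sofic approximation of a group `G`. -/
def IsSoficApprox {G : Type*} [Group G] (d : ℕ → ℕ)
    (σ : ∀ i, G → Equiv.Perm (Fin (d i))) : Prop :=
  (∀ g h : G, Tendsto (fun i => prop fun j => σ i g (σ i h j) = σ i (g * h) j)
      atTop (nhds 1)) ∧
  ∀ g : G, g ≠ 1 → Tendsto (fun i => prop fun j => σ i g j = j) atTop (nhds 0)

/-- The metric `ρ₂` on `X^n` associated with a pseudometric `ρ` on `X`. -/
noncomputable def rho2 {X : Type*} (ρ : X → X → ℝ) {n : ℕ} (x y : Fin n → X) : ℝ :=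
  Real.sqrt ((n : ℝ)⁻¹ * ∑ j, ρ (x j) (y j) ^ 2)

/-- A continuous pseudometric. -/
structure IsCtsPseudoMetric {X : Type*} [TopologicalSpace X] (ρ : X → X → ℝ) : Prop where
  refl : ∀ x, ρ x x = 0
  symm : ∀ x y, ρ x y = ρ y x
  triangle : ∀ x y z, ρ x z ≤ ρ x y + ρ y z
  continuous : Continuous fun p : X × X => ρ p.1 p.2

/-- A dynamically generating pseudometric. -/
def IsDynGenerating {G X : Type*} (act : G → X → X) (ρ : X → X → ℝ) : Prop :=
  ∀ x y : X, x ≠ y → ∃ g : G, 0 < ρ (act g x) (act g y)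

/-- An action of `G` on `X` by homeomorphisms. -/
structure IsActionByHomeos (G X : Type*) [Group G] [TopologicalSpace X]
    (act : G → X → X) : Prop where
  one : ∀ x, act 1 x = x
  mul : ∀ g h x, act (g * h) x = act g (act h x)
  continuous : ∀ g, Continuous (act g)

/-- An action of `G` on a topological group `X` by continuous automorphisms. -/
structure IsActionByAutomorphisms (G X : Type*) [Group G] [TopologicalSpace X] [Group X]
    (act : G → X → X) : Prop where
  one : ∀ x, act 1 x = x
  mul : ∀ g h x, act (g * h) x = act g (act h x)
  continuous : ∀ g, Continuous (act g)
  map_mul : ∀ g x y, act g (x * y) = act g x * act g y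

/-- A compatible bi-invariant metric on a compact topological group: a continuous
separating pseudometric which is invariant under both left and right translations. -/
structure IsCompatBiInvMetric {X : Type*} [TopologicalSpace X] [Group X]
    (ρ : X → X → ℝ) : Prop where
  refl : ∀ x, ρ x x = 0
  symm : ∀ x y, ρ x y = ρ y x
  triangle : ∀ x y z, ρ x z ≤ ρ x y + ρ y z
  continuous : Continuous fun p : X × X => ρ p.1 p.2
  pos : ∀ x y, x ≠ y → 0 < ρ x y
  biinv : ∀ a b x y, ρ (a * x * b) (a * y * b) = ρ x y

/-- The space `Map(ρ, F, δ, σᵢ)` of topological microstates. -/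
def MapSp {G X : Type*} (act : G → X → X) (ρ : X → X → ℝ) {n : ℕ} (F : Finset G) (δ : ℝ)
    (σ : G → Equiv.Perm (Fin n)) : Set (Fin n → X) :=
  {φ | ∀ g ∈ F, rho2 ρ (fun j => act g (φ j)) (fun j => φ (σ g j)) < δ}

/-- The space `Map_μ(ρ, F, L, δ, σᵢ)` of measure-theoretic microstates; the integral of
`f` against the empirical distribution `φ_* u_n` is written as the average `n⁻¹ ∑ j, f (φ j)`. -/
def MapMeas {G X : Type*} [TopologicalSpace X] [MeasurableSpace X]
    (act : G → X → X) (ρ : X → X → ℝ) (μ : Measure X) {n : ℕ}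
    (F : Finset G) (L : Finset C(X, ℝ)) (δ : ℝ) (σ : G → Equiv.Perm (Fin n)) :
    Set (Fin n → X) :=
  {φ | φ ∈ MapSp act ρ F δ σ ∧ ∀ f ∈ L, |(n : ℝ)⁻¹ * ∑ j, f (φ j) - ∫ x, f x ∂μ| < δ}

/-- Local and empirical convergence `μᵢ →^{le} μ`. -/
def LEconv {G X : Type*} [Group G] [TopologicalSpace X] [MeasurableSpace X]
    (d : ℕ → ℕ) (σ : ∀ i, G → Equiv.Perm (Fin (d i)))
    (act : G → X → X) (ρ : X → X → ℝ) (μ : Measure X)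
    (μi : ∀ i, Measure (Fin (d i) → X)) : Prop :=
  ∀ (F : Finset G) (L : Finset C(X, ℝ)) (δ : ℝ), 0 < δ →
    Tendsto (fun i => (μi i (MapMeas act ρ μ F L δ (σ i))).toReal) atTop (nhds 1) ∧
    ∀ f ∈ L, Tendsto (fun i =>
      prop fun j : Fin (d i) => |(∫ φ, f (φ j) ∂(μi i)) - ∫ x, f x ∂μ| < δ)
      atTop (nhds 1)

/-- The diagonal action on `X × X`. -/
def diagAct {G X : Type*} (act : G → X → X) : G → X × X → X × X :=
  fun g p => (act g p.1, act g p.2)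

/-- The pseudometric `ρ̃` on `X × X` induced by `ρ`. -/
noncomputable def prodRho {X : Type*} (ρ : X → X → ℝ) : X × X → X × X → ℝ :=
  fun p q => Real.sqrt ((ρ p.1 q.1 ^ 2 + ρ p.2 q.2 ^ 2) / 2)

/-- The identification of `X^n × Y^n` with `(X × Y)^n`. -/
def zipFun {X Y : Type*} {n : ℕ} (φ : Fin n → X) (ψ : Fin n → Y) : Fin n → X × Y :=
  fun j => (φ j, ψ j)

/-- Local and doubly empirical convergence `μᵢ →^{lde} μ`:
`μᵢ ⊗ μᵢ →^{le} μ ⊗ μ` for the diagonal action. -/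
def LDEconv {G X : Type*} [Group G] [TopologicalSpace X] [MeasurableSpace X]
    (d : ℕ → ℕ) (σ : ∀ i, G → Equiv.Perm (Fin (d i)))
    (act : G → X → X) (ρ : X → X → ℝ) (μ : Measure X)
    (μi : ∀ i, Measure (Fin (d i) → X)) : Prop :=
  LEconv d σ (diagAct act) (prodRho ρ) (μ.prod μ)
    (fun i => Measure.map (fun p : (Fin (d i) → X) × (Fin (d i) → X) => zipFun p.1 p.2)
      ((μi i).prod (μi i)))

/-- `N_ε(S, ρ)`: the maximal cardinality of an `ε`-separated subset of `S`. -/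
noncomputable def sepNum {Z : Type*} (ρ : Z → Z → ℝ) (S : Set Z) (ε : ℝ) : ℝ :=
  sSup {r : ℝ | ∃ A : Finset Z, ↑A ⊆ S ∧
    (∀ x ∈ A, ∀ y ∈ A, x ≠ y → ε < ρ x y) ∧ r = (A.card : ℝ)}

/-- Topological sofic entropy of a factor `π : X → Y` in the presence of `X`. -/
noncomputable def htopPres {G X Y : Type*} [Group G]
    (d : ℕ → ℕ) (σ : ∀ i, G → Equiv.Perm (Fin (d i)))
    (act : G → X → X) (ρX : X → X → ℝ) (π : X → Y) (ρY : Y → Y → ℝ) : EReal :=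
  ⨆ ε ∈ Set.Ioi (0 : ℝ), ⨅ (F : Finset G), ⨅ δ ∈ Set.Ioi (0 : ℝ),
    Filter.limsup (fun i =>
      (((d i : ℝ)⁻¹ *
        Real.log (sepNum (rho2 ρY) ((fun φ => π ∘ φ) '' MapSp act ρX F δ (σ i)) ε) : ℝ) :
          EReal)) atTop

/-- Measure-theoretic sofic entropy of a factor `π : X → Y` in the presence of `(X, μ)`. -/
noncomputable def hmeasPres {G X Y : Type*} [Group G] [TopologicalSpace X] [MeasurableSpace X]
    (d : ℕ → ℕ) (σ : ∀ i, G → Equiv.Perm (Fin (d i)))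
    (act : G → X → X) (ρX : X → X → ℝ) (μ : Measure X) (π : X → Y) (ρY : Y → Y → ℝ) :
    EReal :=
  ⨆ ε ∈ Set.Ioi (0 : ℝ), ⨅ (F : Finset G), ⨅ (L : Finset C(X, ℝ)), ⨅ δ ∈ Set.Ioi (0 : ℝ),
    Filter.limsup (fun i =>
      (((d i : ℝ)⁻¹ *
        Real.log (sepNum (rho2 ρY) ((fun φ => π ∘ φ) '' MapMeas act ρX μ F L δ (σ i)) ε) : ℝ) :
          EReal)) atTop

/-- Topological sofic entropy. -/
noncomputable def htop {G X : Type*} [Group G]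
    (d : ℕ → ℕ) (σ : ∀ i, G → Equiv.Perm (Fin (d i)))
    (act : G → X → X) (ρ : X → X → ℝ) : EReal :=
  htopPres d σ act ρ id ρ

/-- Measure-theoretic sofic entropy. -/
noncomputable def hmeas {G X : Type*} [Group G] [TopologicalSpace X] [MeasurableSpace X]
    (d : ℕ → ℕ) (σ : ∀ i, G → Equiv.Perm (Fin (d i)))
    (act : G → X → X) (ρ : X → X → ℝ) (μ : Measure X) : EReal :=
  hmeasPres d σ act ρ μ id ρ

/-- `S_{ε,δ}(ν, ρ)`: the smallest cardinality of a finite set whose open `ε`-neighborhood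
has `ν`-measure at least `1 - δ`. -/
noncomputable def covNum {Z : Type*} [MeasurableSpace Z] (ρ : Z → Z → ℝ) (ν : Measure Z)
    (ε δ : ℝ) : ℝ :=
  sInf {r : ℝ | ∃ A : Finset Z,
    ENNReal.ofReal (1 - δ) ≤ ν {z | ∃ a ∈ A, ρ a z < ε} ∧ r = (A.card : ℝ)}

/-- The local and doubly empirical model-measure sofic entropy `h^{lde}`. -/
noncomputable def hlde {G X : Type*} [Group G] [TopologicalSpace X] [MeasurableSpace X]
    (d : ℕ → ℕ) (σ : ∀ i, G → Equiv.Perm (Fin (d i)))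
    (act : G → X → X) (ρ : X → X → ℝ) (μ : Measure X) : EReal :=
  ⨆ ε ∈ Set.Ioi (0 : ℝ), ⨆ δ ∈ Set.Ioi (0 : ℝ),
  ⨆ (s : ℕ → ℕ), ⨆ (_ : StrictMono s),
  ⨆ (ν : ∀ n, Measure (Fin (d (s n)) → X)),
  ⨆ (_ : (∀ n, IsProbabilityMeasure (ν n)) ∧
      LDEconv (fun n => d (s n)) (fun n => σ (s n)) act ρ μ ν),
    Filter.limsup (fun n =>
      (((d (s n) : ℝ)⁻¹ * Real.log (covNum (rho2 ρ) (ν n) ε δ) : ℝ) : EReal)) atTop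

/-- Local weak* convergence `μᵢ →^{lw*} μ`. -/
def LWconv {X : Type*} [TopologicalSpace X] [MeasurableSpace X] (d : ℕ → ℕ)
    (μ : Measure X) (μi : ∀ i, Measure (Fin (d i) → X)) : Prop :=
  ∀ (f : C(X, ℝ)) (δ : ℝ), 0 < δ →
    Tendsto (fun i =>
      prop fun j : Fin (d i) => |(∫ φ, f (φ j) ∂(μi i)) - ∫ x, f x ∂μ| < δ)
      atTop (nhds 1)

/-- Ergodicity of an action with respect to a measure. -/
def ErgodicAction {G X : Type*} [MeasurableSpace X] (act : G → X → X) (μ : Measure X) :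
    Prop :=
  ∀ A : Set X, MeasurableSet A → (∀ g, act g '' A = A) → μ A = 0 ∨ μ A = 1

/-- Weak mixing: ergodicity of the diagonal action on the square. -/
def WeaklyMixingAction {G X : Type*} [MeasurableSpace X] (act : G → X → X)
    (μ : Measure X) : Prop :=
  ErgodicAction (diagAct act) (μ.prod μ)

/-- The homoclinic group of an action on a compact group. -/
def homoclinic {G X : Type*} [TopologicalSpace X] [One X] (act : G → X → X) : Set X :=
  {x | Tendsto (fun g => act g x) cofinite (nhds 1)}

/-- The left-shift action of `G` on `A^G`. -/
def shift (G A : Type*) [Group G] : G → (G → A) → (G → A) :=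
  fun g x h => x (g⁻¹ * h)

/-- The map `Ψ : X → X^G`, `Ψ(x)(g) = g⁻¹ x`. -/
def PsiMap {G X : Type*} [Group G] (act : G → X → X) : X → G → X :=
  fun x g => act g⁻¹ x

/-- The map `φ_x : {1,…,dᵢ} → X^G`, `φ_x(j)(g) = x(σᵢ(g)⁻¹ j)`. -/
def phiX {G X : Type*} {n : ℕ} (σi : G → Equiv.Perm (Fin n)) (x : Fin n → X) :
    Fin n → G → X :=
  fun j g => x ((σi g)⁻¹ j)

/-- The uniform measure on `Fin n`. -/
noncomputable def unif (n : ℕ) : Measure (Fin n) := (n : ℝ≥0∞)⁻¹ • Measure.count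

lemma unif_isProb {n : ℕ} (hn : 0 < n) : IsProbabilityMeasure (unif n) := by
  constructor
  have : (Measure.count : Measure (Fin n)) Set.univ = n := by
    simp [Measure.count_univ]
  simp only [unif, Measure.smul_apply, this, smul_eq_mul]
  exact ENNReal.inv_mul_cancel (by exact_mod_cast hn.ne') (by simp)

/-- Pushforward of a probability measure along a measurable map, as a probability measure. -/
noncomputable def pmMap {α β : Type*} [MeasurableSpace α] [MeasurableSpace β]
    (μ : Measure α) (hμ : IsProbabilityMeasure μ) {f : α → β} (hf : Measurable f) :
    ProbabilityMeasure β :=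
  ⟨μ.map f, by haveI := hμ; exact Measure.isProbabilityMeasure_map hf.aemeasurable⟩

lemma measurable_of_fin {β : Type*} [MeasurableSpace β] {n : ℕ} (f : Fin n → β) :
    Measurable f := measurable_from_top

lemma measurable_phiX_coord {G X : Type*} [MeasurableSpace X] {n : ℕ}
    (σi : G → Equiv.Perm (Fin n)) (j : Fin n) :
    Measurable (fun x : Fin n → X => (fun g => x ((σi g)⁻¹ j) : G → X)) :=
  measurable_pi_lambda _ fun _ => measurable_pi_apply _

/-- The empirical distribution of `φ : Fin n → Z`, a probability measure on `Z` (`n > 0`). -/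
noncomputable def empDist {Z : Type*} [MeasurableSpace Z] {n : ℕ} (hn : 0 < n)
    (φ : Fin n → Z) : ProbabilityMeasure Z :=
  pmMap (unif n) (unif_isProb hn) (measurable_of_fin φ)

/-- Convolution of measures on a group. -/
noncomputable def mconv {X : Type*} [MeasurableSpace X] [Mul X] (μ ν : Measure X) :
    Measure X :=
  Measure.map (fun p : X × X => p.1 * p.2) (μ.prod ν)

/-- Convolution of probability measures on a compact metrizable group. -/
noncomputable def pconv {X : Type*} [TopologicalSpace X] [MeasurableSpace X] [BorelSpace X]
    [SecondCountableTopology X] [Group X] [IsTopologicalGroup X]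
    (μ ν : ProbabilityMeasure X) : ProbabilityMeasure X :=
  ⟨mconv (μ : Measure X) (ν : Measure X), by
    have hmul : Measurable fun p : X × X => p.1 * p.2 := continuous_mul.measurable
    exact Measure.isProbabilityMeasure_map hmul.aemeasurable⟩


/-- The diagonal product action of `G` on `X × Y`. -/
def prodAct {G X Y : Type*} (actX : G → X → X) (actY : G → Y → Y) : G → X × Y → X × Y :=
  fun g p => (actX g p.1, actY g p.2)

end SoficPaper

open SoficPaper

/-!
Let `A ⊆ X × X` be invariant under the diagonal action and `α = (m ⊗ m)(A)`. The fibre measures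
`x ↦ m(A_x)` are invariant, hence a.e. equal to `α`. The correlation
`F(t) = (m ⊗ m)(A ∩ (id × (· * t))⁻¹ A)` satisfies `F(g t) = F(t)` because `G` acts by
automorphisms, so `F` is a.e. equal to its mean `∫ m(A_x)² dm(x) = α²`. Since `F(t) → α` as `t → 1`
and every neighbourhood of `1` has positive Haar measure, `α = α²`.
-/

open Set Function
open scoped symmDiff

namespace MeasureTheory

theorem eq_of_tendsto_of_ae_eq_const {X Y : Type*} [TopologicalSpace X] [MeasurableSpace X]
    [TopologicalSpace Y] [T2Space Y] {μ : Measure X} [μ.IsOpenPosMeasure] {f : X → Y} {c : Y}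
    (hf : f =ᵐ[μ] const X c) {x : X} {a : Y} (hfx : Tendsto f (𝓝 x) (𝓝 a)) : a = c := by
  have hdense : Dense {y | f y = c} := Measure.dense_of_ae hf
  have : (𝓝[{y | f y = c}] x).NeBot := mem_closure_iff_nhdsWithin_neBot.1 (hdense x)
  refine tendsto_nhds_unique (hfx.mono_left (nhdsWithin_le_nhds (s := {y | f y = c}))) ?_
  exact tendsto_const_nhds.congr' (eventually_nhdsWithin_of_forall fun y hy => hy.symm)

theorem isMulRightInvariant_of_isProbabilityMeasure {X : Type*} [TopologicalSpace X]
    [LocallyCompactSpace X] [Group X] [IsTopologicalGroup X] [MeasurableSpace X] [BorelSpace X]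
    (m : Measure X) [m.IsHaarMeasure] [IsProbabilityMeasure m] : m.IsMulRightInvariant := by
  refine ⟨fun t => ?_⟩
  have := Measure.isProbabilityMeasure_map (μ := m) (measurable_mul_const t).aemeasurable
  exact Measure.isHaarMeasure_eq_of_isProbabilityMeasure _ _

section Correlation

variable {Y X : Type*} [MeasurableSpace Y] [MeasurableSpace X]

noncomputable def mulRightCorrelation [Mul X] (ν : Measure (Y × X)) (A : Set (Y × X)) (t : X) :
    ℝ≥0∞ :=
  ν (A ∩ Prod.map id (· * t) ⁻¹' A)

theorem measurableSet_mem_and_mul_right_mem [Mul X] [MeasurableMul₂ X] {A : Set (Y × X)}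
    (hA : MeasurableSet A) :
    MeasurableSet {q : X × (Y × X) | q.2 ∈ A ∧ (q.2.1, q.2.2 * q.1) ∈ A} :=
  (measurable_snd hA).inter
    ((measurable_snd.fst.prodMk (measurable_snd.snd.mul measurable_fst)) hA)

theorem measurable_mulRightCorrelation [Mul X] [MeasurableMul₂ X] {ν : Measure (Y × X)}
    [SFinite ν] {A : Set (Y × X)} (hA : MeasurableSet A) :
    Measurable (mulRightCorrelation ν A) :=
  measurable_measure_prodMk_left (measurableSet_mem_and_mul_right_mem hA)

theorem lintegral_mulRightCorrelation [Group X] [MeasurableMul₂ X] (μ : Measure Y)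
    (m : Measure X) [SFinite μ] [SFinite m] [m.IsMulLeftInvariant] {A : Set (Y × X)}
    (hA : MeasurableSet A) :
    ∫⁻ t, mulRightCorrelation (μ.prod m) A t ∂m = ∫⁻ y, m (Prod.mk y ⁻¹' A) ^ 2 ∂μ := by
  set E := {q : X × (Y × X) | q.2 ∈ A ∧ (q.2.1, q.2.2 * q.1) ∈ A}
  have hE : MeasurableSet E := measurableSet_mem_and_mul_right_mem hA
  have hfibre (p : Y × X) : m ((fun t => (t, p)) ⁻¹' E) =
      A.indicator (fun p => m (Prod.mk p.1 ⁻¹' A)) p := by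
    by_cases hp : p ∈ A
    · rw [indicator_of_mem hp, ← measure_preimage_mul m p.2 (Prod.mk p.1 ⁻¹' A)]
      congr 1
      ext t
      simp [E, hp]
    · simp [E, hp]
  have hh : Measurable fun p : Y × X => m (Prod.mk p.1 ⁻¹' A) :=
    (measurable_measure_prodMk_left hA).comp measurable_fst
  calc ∫⁻ t, mulRightCorrelation (μ.prod m) A t ∂m
      = m.prod (μ.prod m) E := (Measure.prod_apply hE).symm
    _ = ∫⁻ p, A.indicator (fun p => m (Prod.mk p.1 ⁻¹' A)) p ∂(μ.prod m) := by
      rw [Measure.prod_apply_symm hE]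
      simp_rw [hfibre]
    _ = ∫⁻ y, ∫⁻ x, A.indicator (fun p => m (Prod.mk p.1 ⁻¹' A)) (y, x) ∂m ∂μ :=
      lintegral_prod _ (hh.indicator hA).aemeasurable
    _ = ∫⁻ y, m (Prod.mk y ⁻¹' A) ^ 2 ∂μ := by
      congr 1
      ext y
      have : ∀ x, A.indicator (fun p => m (Prod.mk p.1 ⁻¹' A)) (y, x) =
          (Prod.mk y ⁻¹' A).indicator (fun _ => m (Prod.mk y ⁻¹' A)) x := fun x => by
        by_cases hx : (y, x) ∈ A <;> simp [hx]
      simp_rw [this]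
      rw [lintegral_indicator_const (measurable_prodMk_left hA), sq]

theorem tendsto_mulRightCorrelation [TopologicalSpace Y] [TopologicalSpace X] [Monoid X]
    [ContinuousMul X] [BorelSpace (Y × X)] [R1Space (Y × X)] {ν : Measure (Y × X)}
    [IsFiniteMeasure ν] [ν.InnerRegularCompactLTTop]
    (hν : ∀ t, MeasurePreserving (Prod.map id (· * t)) ν ν) {A : Set (Y × X)}
    (hA : MeasurableSet A) :
    Tendsto (mulRightCorrelation ν A) (𝓝 1) (𝓝 (ν A)) := by
  let R : C(X, C(Y × X, Y × X)) :=
    ContinuousMap.curry ⟨fun q : X × (Y × X) => (q.2.1, q.2.2 * q.1), by fun_prop⟩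
  have hR1 : R 1 ⁻¹' A = A := by ext p; simp [R]
  have hsymm : Tendsto (fun t => ν ((R t ⁻¹' A) ∆ A)) (𝓝 1) (𝓝 0) := by
    simpa only [hR1] using tendsto_measure_symmDiff_preimage_nhds_zero (R.continuous.tendsto 1)
      (Eventually.of_forall fun t => hν t) (hν 1) hA.nullMeasurableSet (measure_ne_top ν A)
  have hlower : Tendsto (fun t => ν A - ν ((R t ⁻¹' A) ∆ A)) (𝓝 1) (𝓝 (ν A)) := by
    simpa using ENNReal.Tendsto.sub tendsto_const_nhds hsymm (Or.inl (measure_ne_top ν A))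
  refine tendsto_of_tendsto_of_tendsto_of_le_of_le hlower tendsto_const_nhds (fun t => ?_)
    (fun t => measure_mono inter_subset_left)
  rw [tsub_le_iff_right]
  calc ν A ≤ ν (A ∩ R t ⁻¹' A) + ν (A \ R t ⁻¹' A) := measure_le_inter_add_sdiff ν A _
    _ ≤ mulRightCorrelation ν A t + ν ((R t ⁻¹' A) ∆ A) :=
      add_le_add le_rfl (measure_mono fun p hp => Or.inr hp)

end Correlation

end MeasureTheory

namespace SoficPaper

theorem ErgodicAction.exists_ae_eq_const {G α Y : Type*} [MeasurableSpace α] [MeasurableSpace Y]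
    [Nonempty Y] [MeasurableSpace.CountablySeparated Y] {act : G → α → α} {μ : Measure α}
    [IsProbabilityMeasure μ] (herg : ErgodicAction act μ) (hsurj : ∀ g, Surjective (act g))
    {f : α → Y} (hf : Measurable f) (hinv : ∀ g x, f (act g x) = f x) :
    ∃ c, f =ᵐ[μ] const α c := by
  refine exists_eventuallyEq_const_of_forall_separating MeasurableSet fun U hU => ?_
  have himage (g : G) : act g '' (f ⁻¹' U) = f ⁻¹' U := by
    conv_lhs => rw [show f ⁻¹' U = act g ⁻¹' (f ⁻¹' U) by ext x; simp [hinv]]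
    exact image_preimage_eq _ (hsurj g)
  rcases herg _ (hf hU) himage with h0 | h1
  · exact Or.inr (measure_eq_zero_iff_ae_notMem.1 h0)
  · exact Or.inl ((ae_mem_iff_measure_eq (hf hU).nullMeasurableSet).2 (by rw [h1, measure_univ]))

namespace IsActionByAutomorphisms

variable {G X : Type*} [Group G] [TopologicalSpace X] [Group X] {act : G → X → X}

theorem act_inv_act (hact : IsActionByAutomorphisms G X act) (g : G) (x : X) :
    act g⁻¹ (act g x) = x := by
  rw [← hact.mul, inv_mul_cancel, hact.one]

theorem act_act_inv (hact : IsActionByAutomorphisms G X act) (g : G) (x : X) :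
    act g (act g⁻¹ x) = x := by
  simpa using hact.act_inv_act g⁻¹ x

theorem surjective (hact : IsActionByAutomorphisms G X act) (g : G) : Surjective (act g) :=
  fun x => ⟨act g⁻¹ x, hact.act_act_inv g x⟩

theorem diagAct_injective (hact : IsActionByAutomorphisms G X act) (g : G) :
    Injective (diagAct act g) :=
  LeftInverse.injective (g := diagAct act g⁻¹) fun p => by simp [diagAct, hact.act_inv_act]

theorem measurePreserving [IsTopologicalGroup X] [CompactSpace X] [MeasurableSpace X]
    [BorelSpace X] (hact : IsActionByAutomorphisms G X act) (m : Measure X) [m.IsHaarMeasure]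
    (g : G) : MeasurePreserving (act g) m m :=
  MonoidHom.measurePreserving (f := MonoidHom.mk' (act g) (hact.map_mul g)) (hact.continuous g)
    (hact.surjective g) rfl

theorem measure_prodMk_preimage_act [MeasurableSpace X] (hact : IsActionByAutomorphisms G X act)
    {m : Measure X} (hm : ∀ g, MeasurePreserving (act g) m m) {A : Set (X × X)}
    (hA : MeasurableSet A) (hAinv : ∀ g, diagAct act g ⁻¹' A = A) (g : G) (x : X) :
    m (Prod.mk (act g x) ⁻¹' A) = m (Prod.mk x ⁻¹' A) := by
  have hfibre : Prod.mk (act g x) ⁻¹' A = act g⁻¹ ⁻¹' (Prod.mk x ⁻¹' A) := by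
    conv_lhs => rw [← hAinv g⁻¹]
    ext y
    simp [diagAct, hact.act_inv_act]
  rw [hfibre, (hm g⁻¹).measure_preimage (measurable_prodMk_left hA).nullMeasurableSet]

end IsActionByAutomorphisms

theorem mulRightCorrelation_act {G X : Type*} [Group G] [TopologicalSpace X] [Group X]
    [MeasurableSpace X] [MeasurableMul X] {act : G → X → X}
    (hact : IsActionByAutomorphisms G X act) {ν : Measure (X × X)}
    (hν : ∀ g, MeasurePreserving (diagAct act g) ν ν) {A : Set (X × X)} (hA : MeasurableSet A)
    (hAinv : ∀ g, diagAct act g ⁻¹' A = A) (g : G) (t : X) :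
    mulRightCorrelation ν A (act g t) = mulRightCorrelation ν A t := by
  have hcomm :
      Prod.map id (· * act g t) ∘ diagAct act g = diagAct act g ∘ Prod.map id (· * t) := by
    funext p
    simp [diagAct, hact.map_mul]
  have hS : MeasurableSet (A ∩ Prod.map id (· * act g t) ⁻¹' A) :=
    hA.inter (measurable_id.prodMap (measurable_mul_const _) hA)
  rw [mulRightCorrelation, ← (hν g).measure_preimage hS.nullMeasurableSet, preimage_inter,
    hAinv, ← preimage_comp, hcomm, preimage_comp, hAinv, mulRightCorrelation]

end SoficPaper

theorem weaklyMixing_of_ergodic_general {G X : Type*} [Group G]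
    [TopologicalSpace X] [CompactSpace X] [TopologicalSpace.MetrizableSpace X]
    [Group X] [IsTopologicalGroup X] [MeasurableSpace X] [BorelSpace X]
    (act : G → X → X) (hact : IsActionByAutomorphisms G X act)
    (m : MeasureTheory.Measure X) (hHaar : m.IsHaarMeasure)
    (hmProb : MeasureTheory.IsProbabilityMeasure m)
    (herg : ErgodicAction act m) :
    WeaklyMixingAction act m := by
  intro A hA hAimage
  have hAinv (g : G) : diagAct act g ⁻¹' A = A := by
    simpa [hAimage g] using (hact.diagAct_injective g).preimage_image A
  have hm := hact.measurePreserving m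
  have := isMulRightInvariant_of_isProbabilityMeasure m
  obtain ⟨c, hc⟩ := herg.exists_ae_eq_const hact.surjective
    (measurable_measure_prodMk_left hA) (hact.measure_prodMk_preimage_act hm hA hAinv)
  obtain ⟨d, hd⟩ := herg.exists_ae_eq_const hact.surjective (measurable_mulRightCorrelation hA)
    (mulRightCorrelation_act hact (fun g => (hm g).prod (hm g)) hA hAinv)
  have hAc : m.prod m A = c := by
    rw [Measure.prod_apply hA, lintegral_congr_ae hc]
    simp
  have hdc : d = c ^ 2 := by
    have hsq : (fun x => m (Prod.mk x ⁻¹' A) ^ 2) =ᵐ[m] const X (c ^ 2) := hc.fun_comp (· ^ 2)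
    simpa [lintegral_congr_ae hd, lintegral_congr_ae hsq] using
      lintegral_mulRightCorrelation m m hA
  have hAd : m.prod m A = d := eq_of_tendsto_of_ae_eq_const hd <| tendsto_mulRightCorrelation
    (fun t => (MeasurePreserving.id m).prod (measurePreserving_mul_right m t)) hA
  have hidem : IsIdempotentElem (m.prod m A).toNNReal := by
    rw [IsIdempotentElem, ← ENNReal.toNNReal_mul, ← sq, hAc, ← hdc, ← hAd, hAc]
  rcases IsIdempotentElem.iff_eq_zero_or_one.1 hidem with h | h
  · exact Or.inl ((ENNReal.toNNReal_eq_zero_iff _).1 h |>.resolve_right (measure_ne_top _ _))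
  · exact Or.inr ((ENNReal.toNNReal_eq_one_iff _).1 h)

/-- An ergodic action of a countable group on a compact metrizable group
by continuous automorphisms (with the Haar measure) is weakly mixing. -/
theorem weaklyMixing_of_ergodic {G X : Type*} [Group G] [Countable G]
    [TopologicalSpace X] [CompactSpace X] [TopologicalSpace.MetrizableSpace X]
    [Group X] [IsTopologicalGroup X] [MeasurableSpace X] [BorelSpace X]
    (act : G → X → X) (hact : IsActionByAutomorphisms G X act)
    (m : MeasureTheory.Measure X) (hHaar : m.IsHaarMeasure)
    (hmProb : MeasureTheory.IsProbabilityMeasure m)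
    (herg : ErgodicAction act m) :
    WeaklyMixingAction act m :=
  weaklyMixing_of_ergodic_general act hact m hHaar hmProb herg
end

section
/- Let X be a compact metrizable group with Haar probability measure m_X. For every open neighborhood O of m_X in the space Prob(X) of Borel probability measures on X with the weak* topology, there is an open neighborhood V of m_X in Prob(X) such that μ * ν ∈ O for all μ ∈ V and all ν ∈ Prob(X). -/
/-!
Write `∫ f d(μ * ν) = ∫ (∫ f (x * y) dμ(x)) dν(y)`. On a compact group the Haar probability
measure `m` is also right invariant, so `∫ f (x * y) dm(x) = ∫ f dm` for every `y`. The right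
translates of `f` form a compact subset of `C(X, ℝ)` and `(μ, g) ↦ ∫ g dμ` is jointly continuous,
so as `μ → m` the inner integrals converge to `∫ f dm` uniformly in `y`; averaging over `y`
against an arbitrary `ν` preserves this closeness.
-/

open MeasureTheory Filter Topology
open scoped ENNReal NNReal BigOperators Classical

open SoficPaper

open scoped BoundedContinuousFunction

lemma MeasureTheory.Measure.isMulRightInvariant_of_isProbabilityMeasure {G : Type*}
    [TopologicalSpace G] [LocallyCompactSpace G] [Group G] [IsTopologicalGroup G]
    [MeasurableSpace G] [BorelSpace G] (μ : Measure G) [IsProbabilityMeasure μ]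
    [μ.IsHaarMeasure] : μ.IsMulRightInvariant where
  map_mul_right_eq_self g := by
    have : IsProbabilityMeasure (μ.map (· * g)) :=
      Measure.isProbabilityMeasure_map (measurable_mul_const g).aemeasurable
    exact Measure.isHaarMeasure_eq_of_isProbabilityMeasure _ _

lemma MeasureTheory.ProbabilityMeasure.continuous_integral_prod_boundedContinuousFunction
    {X : Type*} [TopologicalSpace X] [MeasurableSpace X] [OpensMeasurableSpace X] :
    Continuous fun p : ProbabilityMeasure X × (X →ᵇ ℝ) => ∫ x, p.2 x ∂p.1 := by
  refine continuous_iff_continuousAt.2 fun ⟨μ₀, f₀⟩ => ?_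
  have hsplit : ∀ p : ProbabilityMeasure X × (X →ᵇ ℝ),
      ∫ x, p.2 x ∂p.1 = ∫ x, f₀ x ∂p.1 + ∫ x, (p.2 - f₀) x ∂p.1 := fun p => by
    rw [← integral_add (f₀.integrable _) ((p.2 - f₀).integrable _)]
    simp
  have hmain : Tendsto (fun p : ProbabilityMeasure X × (X →ᵇ ℝ) => ∫ x, f₀ x ∂p.1)
      (𝓝 (μ₀, f₀)) (𝓝 (∫ x, f₀ x ∂μ₀)) :=
    ((continuous_integral_boundedContinuousFunction f₀).comp continuous_fst).continuousAt
  have herr : Tendsto (fun p : ProbabilityMeasure X × (X →ᵇ ℝ) => ∫ x, (p.2 - f₀) x ∂p.1)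
      (𝓝 (μ₀, f₀)) (𝓝 0) := by
    refine squeeze_zero_norm (fun p => (p.2 - f₀).norm_integral_le_norm (p.1 : Measure X)) ?_
    simpa using (continuous_snd.sub (continuous_const (y := f₀))).norm.tendsto (μ₀, f₀)
  simpa [ContinuousAt, hsplit] using hmain.add herr

lemma continuous_integral_comp_mul_right {X : Type*} [TopologicalSpace X] [CompactSpace X]
    [Mul X] [ContinuousMul X] [MeasurableSpace X] [OpensMeasurableSpace X] (f : C(X, ℝ)) :
    Continuous fun p : ProbabilityMeasure X × X => ∫ x, f (x * p.2) ∂p.1 :=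
  let translates : C(X, C(X, ℝ)) :=
    ContinuousMap.curry ⟨fun q : X × X => f (q.2 * q.1), by fun_prop⟩
  ProbabilityMeasure.continuous_integral_prod_boundedContinuousFunction.comp
    (continuous_fst.prodMk ((ContinuousMap.isometryEquivBoundedOfCompact X ℝ).continuous.comp
      (translates.continuous.comp continuous_snd)))

lemma eventually_forall_abs_integral_comp_mul_right_sub_lt {X : Type*} [TopologicalSpace X]
    [CompactSpace X] [Group X] [IsTopologicalGroup X] [MeasurableSpace X] [BorelSpace X]
    (m : ProbabilityMeasure X)
    [(m : Measure X).IsHaarMeasure] (f : C(X, ℝ)) {ε : ℝ} (hε : 0 < ε) :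
    ∀ᶠ μ : ProbabilityMeasure X in 𝓝 m, ∀ y : X, |∫ x, f (x * y) ∂μ - ∫ x, f x ∂m| < ε := by
  have := (m : Measure X).isMulRightInvariant_of_isProbabilityMeasure
  simpa using isCompact_univ.eventually_forall_of_forall_eventually fun y _ => by
    have hcont := (continuous_integral_comp_mul_right f).tendsto (m, y)
    rw [integral_mul_right_eq_self (fun x => f x) y] at hcont
    exact hcont.eventually (Metric.ball_mem_nhds _ hε) |>.mono fun _ h => by
      simpa [Real.dist_eq] using h

section Convolution

variable {X : Type*} [TopologicalSpace X] [SecondCountableTopology X] [Group X]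
  [IsTopologicalGroup X] [MeasurableSpace X] [BorelSpace X]

lemma integrable_comp_mul_prod (μ ν : ProbabilityMeasure X) (f : X →ᵇ ℝ) :
    Integrable (fun p : X × X => f (p.1 * p.2)) ((μ : Measure X).prod ν) :=
  (f.compContinuous ⟨fun p : X × X => p.1 * p.2, continuous_mul⟩).integrable _

lemma integral_pconv (μ ν : ProbabilityMeasure X) (f : X →ᵇ ℝ) :
    ∫ x, f x ∂(pconv μ ν) = ∫ y, ∫ x, f (x * y) ∂μ ∂ν := by
  rw [show (pconv μ ν : Measure X) = Measure.map (fun p : X × X => p.1 * p.2) _ from rfl,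
    integral_map measurable_mul.aemeasurable f.continuous.aestronglyMeasurable,
    integral_prod_symm _ (integrable_comp_mul_prod μ ν f)]

lemma abs_integral_pconv_sub_le (μ ν : ProbabilityMeasure X) (f : X →ᵇ ℝ) {c ε : ℝ}
    (h : ∀ y, |∫ x, f (x * y) ∂μ - c| ≤ ε) : |∫ x, f x ∂(pconv μ ν) - c| ≤ ε := by
  have hint : Integrable (fun y => ∫ x, f (x * y) ∂μ) ν :=
    (integrable_comp_mul_prod μ ν f).integral_prod_right
  calc |∫ x, f x ∂(pconv μ ν) - c| = ‖∫ y, (∫ x, f (x * y) ∂μ - c) ∂ν‖ := by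
        rw [integral_pconv, integral_sub hint (integrable_const c)]
        simp
    _ ≤ ε := by
        simpa using norm_integral_le_of_norm_le_const (μ := (ν : Measure X))
          (ae_of_all _ fun y => (Real.norm_eq_abs _).trans_le (h y))

theorem tendsto_pconv_nhds_prod_top [CompactSpace X] (m : ProbabilityMeasure X)
    [(m : Measure X).IsHaarMeasure] :
    Tendsto (fun p : ProbabilityMeasure X × ProbabilityMeasure X => pconv p.1 p.2)
      (𝓝 m ×ˢ ⊤) (𝓝 m) := by
  refine ProbabilityMeasure.tendsto_iff_forall_integral_tendsto.2 fun f => ?_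
  refine Metric.tendsto_nhds.2 fun ε hε => ?_
  have hunif := eventually_forall_abs_integral_comp_mul_right_sub_lt m f.toContinuousMap
    (half_pos hε)
  filter_upwards [hunif.prod_inl ⊤] with p hp
  rw [Real.dist_eq]
  exact (abs_integral_pconv_sub_le p.1 p.2 f fun y => (hp y).le).trans_lt (half_lt_self hε)

end Convolution

/-- For every weak* neighborhood `O` of the Haar measure on a compact
metrizable group there is a weak* neighborhood `V` of the Haar measure with
`μ * ν ∈ O` for all `μ ∈ V` and all probability measures `ν`. -/
theorem exists_nhd_convolution_mem {X : Type*}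
    [TopologicalSpace X] [CompactSpace X] [TopologicalSpace.MetrizableSpace X]
    [Group X] [IsTopologicalGroup X] [MeasurableSpace X] [BorelSpace X]
    (m : MeasureTheory.ProbabilityMeasure X)
    (hHaar : (m : MeasureTheory.Measure X).IsHaarMeasure) :
    ∀ O : Set (MeasureTheory.ProbabilityMeasure X), IsOpen O → m ∈ O →
      ∃ V : Set (MeasureTheory.ProbabilityMeasure X), IsOpen V ∧ m ∈ V ∧
        ∀ μ ∈ V, ∀ ν : MeasureTheory.ProbabilityMeasure X, pconv μ ν ∈ O := by
  intro O hO hmO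
  have := hHaar
  have hgood : {μ | ∀ ν, pconv μ ν ∈ O} ∈ 𝓝 m :=
    mem_prod_top.1 (tendsto_pconv_nhds_prod_top m (hO.mem_nhds hmO))
  obtain ⟨V, hVgood, hVopen, hmV⟩ := mem_nhds_iff.1 hgood
  exact ⟨V, hVopen, hmV, fun μ hμ => hVgood hμ⟩
end

section
/- Let G be a countable discrete sofic group with a fixed sofic approximation σ_i : G → Sym({1,…,d_i}), let X be a compact metrizable space with a continuous G-action by homeomorphisms, let ρ be a dynamically generating continuous pseudometric on X, let μ be a G-invariant Borel probability measure on X, and let Ψ : X → X^G be Ψ(x)(g) = g^{-1}·x. Then for every weak* open neighborhood O of Ψ_*μ in Prob(X^G), there exist a finite F ⊆ G, a finite L ⊆ C(X), a δ > 0 and an I ∈ ℕ such that for all i ≥ I and all x ∈ Map_μ(ρ,F,L,δ,σ_i), one has (φ_x)_*(u_{d_i}) ∈ O. -/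
open MeasureTheory Filter Topology
open scoped ENNReal NNReal BigOperators Classical

/-! The `g`-coordinate of `φ_x(j)` is `x(σ_g⁻¹ j)`, that of `Ψ(x j)` is `g⁻¹ · x j`. For each `h`,
the microstate condition at `h` and `hg⁻¹` and the sofic identity `σ_{hg⁻¹} σ_g ≈ σ_h` make
`ρ(h · x(σ_g⁻¹ j), hg⁻¹ · x j)` small on average over `j`; as `ρ` is dynamically generating and
`X` is compact, every `f ∈ C(X)` is uniformly continuous for finitely many such `ρ(h ·, h ·)`,
so `f(x(σ_g⁻¹ j))` and `f(g⁻¹ · x j)` are close on average. The test functions `p` on `X^G` for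
which the mean of `|p ∘ φ_x - p ∘ Ψ ∘ x|` tends to `0` form a closed subalgebra containing these
coordinate functions, hence all of `C(X^G)` by Stone–Weierstrass. So integrals against
`(φ_x)_* u` are close to those against `(Ψ ∘ x)_* u = Ψ_* (x_* u)`, and these are close to the
integrals against `Ψ_* μ` once `L` contains `p ∘ Ψ`. -/

namespace SoficPaper

open Finset

section Averages

variable {n : ℕ}

lemma prop_nonneg (P : Fin n → Prop) : 0 ≤ prop P := by
  unfold prop; positivity

lemma prop_not_le (P : Fin n → Prop) : prop (fun j => ¬ P j) ≤ 1 - prop P := by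
  rcases Nat.eq_zero_or_pos n with rfl | hn
  · simp [prop]
  rw [le_sub_iff_add_le, prop, prop, ← add_div, div_le_one (by positivity)]
  norm_cast
  rw [add_comm, card_filter_add_card_filter_not]
  simp

lemma mean_le_sqrt_mean_sq (a : Fin n → ℝ) :
    (n : ℝ)⁻¹ * ∑ j, a j ≤ √((n : ℝ)⁻¹ * ∑ j, a j ^ 2) := by
  refine (le_abs_self _).trans (Real.abs_le_sqrt ?_)
  rcases Nat.eq_zero_or_pos n with rfl | hn
  · simp
  have hn' : (0 : ℝ) < n := by exact_mod_cast hn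
  have hcs := sq_sum_le_card_mul_sum_sq (s := univ) (f := a)
  rw [card_univ, Fintype.card_fin] at hcs
  calc ((n : ℝ)⁻¹ * ∑ j, a j) ^ 2 = (n : ℝ)⁻¹ ^ 2 * (∑ j, a j) ^ 2 := by ring
    _ ≤ (n : ℝ)⁻¹ ^ 2 * (n * ∑ j, a j ^ 2) := by gcongr
    _ = (n : ℝ)⁻¹ * ∑ j, a j ^ 2 := by field_simp

lemma mean_le_mul_prop (b : Fin n → ℝ) (P : Fin n → Prop) {M : ℝ}
    (hM : ∀ k, P k → b k ≤ M) (hzero : ∀ k, ¬ P k → b k ≤ 0) :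
    (n : ℝ)⁻¹ * ∑ k, b k ≤ M * prop P := by
  rw [← sum_filter_add_sum_filter_not univ P, prop, mul_div_assoc', div_eq_inv_mul]
  gcongr
  calc ∑ k ∈ univ.filter P, b k + ∑ k ∈ univ.filter (fun k => ¬ P k), b k
      ≤ ∑ _k ∈ univ.filter P, M + ∑ _k ∈ univ.filter (fun k => ¬ P k), (0 : ℝ) := by
        gcongr with k hk k hk
        · exact hM k (mem_filter.1 hk).2
        · exact hzero k (mem_filter.1 hk).2
    _ = M * (univ.filter P).card := by simp [mul_comm]

end Averages

section MeanAbsDev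

variable {Y : Type*}

noncomputable def meanAbsDev {n : ℕ} (p : Y → ℝ) (u v : Fin n → Y) : ℝ :=
  (n : ℝ)⁻¹ * ∑ j, |p (u j) - p (v j)|

variable {n : ℕ} {p q : Y → ℝ} {u v : Fin n → Y}

lemma meanAbsDev_nonneg : 0 ≤ meanAbsDev p u v := by
  unfold meanAbsDev; positivity

lemma abs_mean_sub_mean_le_meanAbsDev :
    |(n : ℝ)⁻¹ * ∑ j, p (u j) - (n : ℝ)⁻¹ * ∑ j, p (v j)| ≤ meanAbsDev p u v := by
  rw [← mul_sub, ← sum_sub_distrib, abs_mul, abs_of_nonneg (by positivity), meanAbsDev]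
  gcongr
  exact abs_sum_le_sum_abs _ _

lemma meanAbsDev_le_mean {b : Fin n → ℝ} (h : ∀ j, |p (u j) - p (v j)| ≤ b j) :
    meanAbsDev p u v ≤ (n : ℝ)⁻¹ * ∑ j, b j := by
  unfold meanAbsDev; gcongr with j; exact h j

lemma meanAbsDev_add_le : meanAbsDev (p + q) u v ≤ meanAbsDev p u v + meanAbsDev q u v := by
  have hmean : meanAbsDev p u v + meanAbsDev q u v =
      (n : ℝ)⁻¹ * ∑ j, (|p (u j) - p (v j)| + |q (u j) - q (v j)|) := by
    simp only [meanAbsDev, sum_add_distrib, mul_add]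
  rw [hmean]
  refine meanAbsDev_le_mean fun j => ?_
  calc |(p + q) (u j) - (p + q) (v j)| = |(p (u j) - p (v j)) + (q (u j) - q (v j))| := by
        simp only [Pi.add_apply]; ring_nf
    _ ≤ _ := abs_add_le _ _

lemma meanAbsDev_mul_le {A B : ℝ} (hp : ∀ y, |p y| ≤ A) (hq : ∀ y, |q y| ≤ B) :
    meanAbsDev (p * q) u v ≤ A * meanAbsDev q u v + B * meanAbsDev p u v := by
  have hmean : A * meanAbsDev q u v + B * meanAbsDev p u v = (n : ℝ)⁻¹ *
      ∑ j, (A * |q (u j) - q (v j)| + B * |p (u j) - p (v j)|) := by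
    simp only [meanAbsDev, sum_add_distrib, ← mul_sum]; ring
  rw [hmean]
  refine meanAbsDev_le_mean fun j => ?_
  have hA : 0 ≤ A := (abs_nonneg _).trans (hp (u j))
  have hB : 0 ≤ B := (abs_nonneg _).trans (hq (u j))
  calc |(p * q) (u j) - (p * q) (v j)|
      = |p (u j) * (q (u j) - q (v j)) + q (v j) * (p (u j) - p (v j))| := by
        simp only [Pi.mul_apply]; ring_nf
    _ ≤ |p (u j)| * |q (u j) - q (v j)| + |q (v j)| * |p (u j) - p (v j)| := by
        rw [← abs_mul, ← abs_mul]; exact abs_add_le _ _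
    _ ≤ A * |q (u j) - q (v j)| + B * |p (u j) - p (v j)| := by
        gcongr
        exacts [hp _, hq _]

lemma mean_add_const_le (a : Fin n → ℝ) {c : ℝ} (hc : 0 ≤ c) :
    (n : ℝ)⁻¹ * ∑ j, (a j + c) ≤ (n : ℝ)⁻¹ * ∑ j, a j + c := by
  rw [sum_add_distrib, mul_add, sum_const, card_univ, Fintype.card_fin, nsmul_eq_mul]
  rcases Nat.eq_zero_or_pos n with rfl | hn
  · simpa using hc
  · rw [inv_mul_cancel_left₀ (by positivity)]

lemma meanAbsDev_le_add {r : ℝ} (hr : 0 ≤ r) (hpq : ∀ y, |p y - q y| ≤ r) :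
    meanAbsDev p u v ≤ meanAbsDev q u v + 2 * r := by
  refine (meanAbsDev_le_mean fun j => ?_).trans (mean_add_const_le _ (by positivity))
  calc |p (u j) - p (v j)|
      = |(q (u j) - q (v j)) + (p (u j) - q (u j)) - (p (v j) - q (v j))| := by ring_nf
    _ ≤ |q (u j) - q (v j)| + 2 * r := by
        linarith [abs_sub (q (u j) - q (v j) + (p (u j) - q (u j))) (p (v j) - q (v j)),
          abs_add_le (q (u j) - q (v j)) (p (u j) - q (u j)), hpq (u j), hpq (v j)]

lemma meanAbsDev_le_of_forall_abs_sub_le {ι : Type*} (E : Finset ι) (D : ι → Y → Y → ℝ)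
    {ε C : ℝ} (hε : 0 ≤ ε) (hp : ∀ a b, |p a - p b| ≤ ε + C * ∑ h ∈ E, D h a b) :
    meanAbsDev p u v ≤ ε + C * ∑ h ∈ E, (n : ℝ)⁻¹ * ∑ j, D h (u j) (v j) := by
  refine (meanAbsDev_le_mean fun j => (hp (u j) (v j)).trans_eq (add_comm _ _)).trans ?_
  refine (mean_add_const_le _ hε).trans_eq ?_
  simp only [← mul_sum, mul_left_comm C, sum_comm (s := E)]
  ring

end MeanAbsDev

section AgreeSubalgebra

variable {Y α : Type*} [TopologicalSpace Y] [CompactSpace Y] (l : Filter α) {n : α → ℕ}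
  (u v : ∀ a, Fin (n a) → Y)

lemma abs_apply_le_norm (p : C(Y, ℝ)) (y : Y) : |p y| ≤ ‖p‖ :=
  (Real.norm_eq_abs _).symm.trans_le (p.norm_coe_le_norm y)

def agreeSubalgebra : Subalgebra ℝ C(Y, ℝ) where
  carrier := {p | Tendsto (fun a => meanAbsDev p (u a) (v a)) l (𝓝 0)}
  mul_mem' {p q} hp hq := by
    refine squeeze_zero (fun _ => meanAbsDev_nonneg)
      (fun a => meanAbsDev_mul_le (abs_apply_le_norm p) (abs_apply_le_norm q)) ?_
    simpa using (hq.const_mul ‖p‖).add (hp.const_mul ‖q‖)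
  add_mem' {p q} hp hq :=
    squeeze_zero (fun _ => meanAbsDev_nonneg) (fun _ => meanAbsDev_add_le)
      (by simpa using hp.add hq)
  algebraMap_mem' r := by
    simpa [meanAbsDev] using tendsto_const_nhds

lemma isClosed_agreeSubalgebra : IsClosed (agreeSubalgebra l u v : Set C(Y, ℝ)) := by
  refine isClosed_of_closure_subset fun p hp => Metric.tendsto_nhds.2 fun ε hε => ?_
  obtain ⟨q, hq, hpq⟩ := Metric.mem_closure_iff.1 hp (ε / 4) (by positivity)
  filter_upwards [Metric.tendsto_nhds.1 hq (ε / 2) (by positivity)] with a ha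
  rw [Real.dist_0_eq_abs, abs_of_nonneg meanAbsDev_nonneg] at ha ⊢
  have := meanAbsDev_le_add (u := u a) (v := v a) dist_nonneg
    fun y => (Real.dist_eq _ _).symm.trans_le (ContinuousMap.dist_apply_le_dist (f := p) (g := q) y)
  linarith

end AgreeSubalgebra

lemma separatesPoints_adjoin_comp_eval {ι Y : Type*} [TopologicalSpace Y] [T35Space Y] :
    (Algebra.adjoin ℝ (Set.range fun fi : C(Y, ℝ) × ι =>
      fi.1.comp (ContinuousMap.eval (X := fun _ => Y) fi.2))).SeparatesPoints := by
  intro x y hxy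
  obtain ⟨i, hi⟩ := Function.ne_iff.1 hxy
  obtain ⟨f, hf, hfi⟩ := separatesPoints_continuous_of_t35Space hi
  exact ⟨_, ⟨_, Algebra.subset_adjoin ⟨(⟨f, hf⟩, i), rfl⟩, rfl⟩, hfi⟩

section Dynamics

variable {G X : Type*} [TopologicalSpace X] {ρ : X → X → ℝ}

lemma IsCtsPseudoMetric.nonneg (hρ : IsCtsPseudoMetric ρ) (x y : X) : 0 ≤ ρ x y := by
  linarith [hρ.triangle x y x, hρ.refl x, hρ.symm y x]

lemma IsCtsPseudoMetric.exists_le [CompactSpace X] (hρ : IsCtsPseudoMetric ρ) :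
    ∃ M, ∀ x y, ρ x y ≤ M := by
  obtain ⟨M, hM⟩ := (isCompact_range hρ.continuous).bddAbove
  exact ⟨M, fun x y => hM ⟨(x, y), rfl⟩⟩

lemma IsDynGenerating.exists_abs_sub_le [CompactSpace X] {act : G → X → X}
    (hgen : IsDynGenerating act ρ) (hact : ∀ g, Continuous (act g)) (hρ : IsCtsPseudoMetric ρ)
    (f : C(X, ℝ)) {ε : ℝ} (hε : 0 < ε) :
    ∃ (E : Finset G) (C : ℝ), 0 ≤ C ∧
      ∀ a b, |f a - f b| ≤ ε + C * ∑ h ∈ E, ρ (act h a) (act h b) := by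
  -- `∑ h ∈ E, ρ (act h a) (act h b)` is bounded below by some `m > 0` on the compact set `K`
  -- where `f` varies by at least `ε`; off `K` the bound holds with any `C ≥ 0`.
  set K : Set (X × X) := {p | ε ≤ |f p.1 - f p.2|}
  have hK : IsCompact K := (isClosed_le continuous_const (by fun_prop)).isCompact
  have hρh : ∀ h, Continuous fun p : X × X => ρ (act h p.1) (act h p.2) :=
    fun h => hρ.continuous.comp ((hact h).prodMap (hact h))
  obtain ⟨E, hE⟩ := hK.elim_finite_subcover (fun h => {p : X × X | 0 < ρ (act h p.1) (act h p.2)})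
    (fun h => isOpen_lt continuous_const (hρh h)) fun p hp => by
      obtain ⟨h, hh⟩ := hgen p.1 p.2 fun heq => by
        have hp' : ε ≤ |f p.1 - f p.2| := hp
        rw [heq, sub_self, abs_zero] at hp'
        linarith
      exact Set.mem_iUnion.2 ⟨h, hh⟩
  obtain ⟨m, hm, hms⟩ := hK.exists_forall_le' (a := 0)
    (continuous_finsetSum E fun h _ => hρh h).continuousOn fun p hp => by
      obtain ⟨h, hhE, hh⟩ := Set.mem_iUnion₂.1 (hE hp)
      exact hh.trans_le (single_le_sum (f := fun h => ρ (act h p.1) (act h p.2))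
        (fun g _ => hρ.nonneg _ _) hhE)
  refine ⟨E, 2 * ‖f‖ / m, by positivity, fun a b => ?_⟩
  have hs : 0 ≤ ∑ h ∈ E, ρ (act h a) (act h b) := sum_nonneg fun h _ => hρ.nonneg _ _
  by_cases hab : (a, b) ∈ K
  · have hfab : |f a - f b| ≤ 2 * ‖f‖ := by
      linarith [abs_sub (f a) (f b), abs_apply_le_norm f a, abs_apply_le_norm f b]
    have hC : 2 * ‖f‖ ≤ 2 * ‖f‖ / m * ∑ h ∈ E, ρ (act h a) (act h b) := by
      rw [div_mul_eq_mul_div, le_div_iff₀ hm]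
      gcongr
      exact hms _ hab
    linarith
  · have hfab : |f a - f b| < ε := not_le.1 hab
    have : 0 ≤ 2 * ‖f‖ / m * ∑ h ∈ E, ρ (act h a) (act h b) := by positivity
    linarith

lemma IsSoficApprox.tendsto_prop_ne [Group G] {d : ℕ → ℕ} {σ : ∀ i, G → Equiv.Perm (Fin (d i))}
    (hσ : IsSoficApprox d σ) (g h : G) :
    Tendsto (fun i => prop fun k => σ i g (σ i h k) ≠ σ i (g * h) k) atTop (𝓝 0) := by
  refine squeeze_zero (fun _ => prop_nonneg _) (fun i => prop_not_le _) ?_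
  simpa using (tendsto_const_nhds (x := (1 : ℝ))).sub (hσ.1 g h)

lemma mean_le_rho2_add_mul_prop_add [Group G] {n : ℕ} (hρ : IsCtsPseudoMetric ρ) {M : ℝ}
    (hM : ∀ x y, ρ x y ≤ M) (act : G → X → X) (s : G → Equiv.Perm (Fin n)) (x : Fin n → X)
    (g h : G) :
    (n : ℝ)⁻¹ * ∑ j, ρ (act h (x ((s g)⁻¹ j))) (act (h * g⁻¹) (x j)) ≤
      rho2 ρ (fun k => act h (x k)) (fun k => x (s h k)) +
      M * prop (fun k => s (h * g⁻¹) (s g k) ≠ s h k) +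
      rho2 ρ (fun j => act (h * g⁻¹) (x j)) (fun j => x (s (h * g⁻¹) j)) := by
  -- Put `j = s g k` and go from `act h (x k)` to `act a (x (s g k))` through `x (s h k)` and
  -- `x (s a (s g k))`, which coincide except at a sofic defect of `s`.
  set a := h * g⁻¹
  have hreindex : ∑ j, ρ (act h (x ((s g)⁻¹ j))) (act a (x j)) =
      ∑ k, ρ (act h (x k)) (act a (x (s g k))) := by
    rw [← Equiv.sum_comp (s g)]
    simp
  have hthird : ∑ k, ρ (x (s a (s g k))) (act a (x (s g k))) =
      ∑ j, ρ (act a (x j)) (x (s a j)) := by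
    rw [Equiv.sum_comp (s g) fun j => ρ (x (s a j)) (act a (x j))]
    simp only [hρ.symm (x _)]
  have hmid := mean_le_mul_prop (fun k => ρ (x (s h k)) (x (s a (s g k))))
    (fun k => s a (s g k) ≠ s h k) (fun k _ => hM _ _)
    fun k hk => by rw [not_not.1 hk, hρ.refl]
  calc (n : ℝ)⁻¹ * ∑ j, ρ (act h (x ((s g)⁻¹ j))) (act a (x j))
      ≤ (n : ℝ)⁻¹ * ∑ k, (ρ (act h (x k)) (x (s h k)) + ρ (x (s h k)) (x (s a (s g k))) +
          ρ (x (s a (s g k))) (act a (x (s g k)))) := by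
        rw [hreindex]
        gcongr with k
        linarith [hρ.triangle (act h (x k)) (x (s h k)) (act a (x (s g k))),
          hρ.triangle (x (s h k)) (x (s a (s g k))) (act a (x (s g k)))]
    _ = (n : ℝ)⁻¹ * ∑ k, ρ (act h (x k)) (x (s h k)) +
          (n : ℝ)⁻¹ * ∑ k, ρ (x (s h k)) (x (s a (s g k))) +
          (n : ℝ)⁻¹ * ∑ j, ρ (act a (x j)) (x (s a j)) := by
        rw [← hthird]; simp only [sum_add_distrib, mul_add]
    _ ≤ _ := add_le_add (add_le_add (mean_le_sqrt_mean_sq _) hmid) (mean_le_sqrt_mean_sq _)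

end Dynamics

section Microstates

variable {G X : Type*} (d : ℕ → ℕ) (σ : ∀ i, G → Equiv.Perm (Fin (d i))) (act : G → X → X)
  (ρ : X → X → ℝ)

/-- A property holds eventually along this filter iff there are `F`, `δ > 0` and `I` such that it
holds for every `⟨i, x⟩` with `i ≥ I` and `x ∈ Map(ρ, F, δ, σᵢ)`; `measMicrostates` is the
analogue for `Map_μ(ρ, F, L, δ, σᵢ)`. -/
def topMicrostates : Filter (Σ i, Fin (d i) → X) :=
  ⨅ (F : Finset G) (δ : ℝ) (_ : 0 < δ) (I : ℕ),
    𝓟 {q | I ≤ q.1 ∧ q.2 ∈ MapSp act ρ F δ (σ q.1)}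

lemma mem_topMicrostates (F : Finset G) {δ : ℝ} (hδ : 0 < δ) (I : ℕ) :
    {q | I ≤ q.1 ∧ q.2 ∈ MapSp act ρ F δ (σ q.1)} ∈ topMicrostates d σ act ρ :=
  mem_iInf_of_mem F <| mem_iInf_of_mem δ <| mem_iInf_of_mem hδ <| mem_iInf_of_mem I <|
    mem_principal_self _

lemma tendsto_fst_topMicrostates : Tendsto Sigma.fst (topMicrostates d σ act ρ) atTop :=
  tendsto_atTop.2 fun I => mem_of_superset (mem_topMicrostates d σ act ρ ∅ one_pos I)
    fun _ hq => hq.1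

lemma tendsto_rho2_topMicrostates (g : G) :
    Tendsto (fun q : Σ i, Fin (d i) → X =>
        rho2 ρ (fun j => act g (q.2 j)) (fun j => q.2 (σ q.1 g j)))
      (topMicrostates d σ act ρ) (𝓝 0) :=
  Metric.tendsto_nhds.2 fun _ hδ => mem_of_superset (mem_topMicrostates d σ act ρ {g} hδ 0)
    fun _ hq => (Real.dist_0_eq_abs _).trans_lt <|
      (abs_of_nonneg (Real.sqrt_nonneg _)).trans_lt (hq.2 g (mem_singleton_self g))

variable [TopologicalSpace X] [MeasurableSpace X] (μ : Measure X)

lemma mapMeas_mono {F F' : Finset G} {L L' : Finset C(X, ℝ)} {δ δ' : ℝ} (hF : F ⊆ F')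
    (hL : L ⊆ L') (hδ : δ' ≤ δ) {n : ℕ} (s : G → Equiv.Perm (Fin n)) :
    MapMeas act ρ μ F' L' δ' s ⊆ MapMeas act ρ μ F L δ s :=
  fun _ hx => ⟨fun g hg => (hx.1 g (hF hg)).trans_le hδ, fun f hf => (hx.2 f (hL hf)).trans_le hδ⟩

def measMicrostates : Filter (Σ i, Fin (d i) → X) :=
  ⨅ c : Finset G × Finset C(X, ℝ) × Set.Ioi (0 : ℝ) × ℕ,
    𝓟 {q | c.2.2.2 ≤ q.1 ∧ q.2 ∈ MapMeas act ρ μ c.1 c.2.1 c.2.2.1 (σ q.1)}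

lemma measMicrostates_hasBasis :
    (measMicrostates d σ act ρ μ).HasBasis (fun _ => True)
      fun c : Finset G × Finset C(X, ℝ) × Set.Ioi (0 : ℝ) × ℕ =>
        {q | c.2.2.2 ≤ q.1 ∧ q.2 ∈ MapMeas act ρ μ c.1 c.2.1 c.2.2.1 (σ q.1)} := by
  refine hasBasis_iInf_principal fun c c' => ⟨(c.1 ∪ c'.1, c.2.1 ∪ c'.2.1,
    ⟨min c.2.2.1 c'.2.2.1, Set.mem_Ioi.2 (lt_min c.2.2.1.2 c'.2.2.1.2)⟩,
    max c.2.2.2 c'.2.2.2), ?_, ?_⟩ <;> rintro q ⟨hI, hx⟩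
  · exact ⟨le_of_max_le_left hI, mapMeas_mono act ρ μ subset_union_left subset_union_left
      (min_le_left _ _) _ hx⟩
  · exact ⟨le_of_max_le_right hI, mapMeas_mono act ρ μ subset_union_right subset_union_right
      (min_le_right _ _) _ hx⟩

lemma measMicrostates_le_topMicrostates :
    measMicrostates d σ act ρ μ ≤ topMicrostates d σ act ρ := by
  simp only [topMicrostates, le_iInf_iff, le_principal_iff]
  intro F δ hδ I
  exact (measMicrostates_hasBasis d σ act ρ μ).mem_of_superset (i := (F, ∅, ⟨δ, hδ⟩, I)) trivial
    fun q hq => ⟨hq.1, hq.2.1⟩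

lemma tendsto_mean_measMicrostates (f : C(X, ℝ)) :
    Tendsto (fun q : Σ i, Fin (d i) → X => (d q.1 : ℝ)⁻¹ * ∑ j, f (q.2 j))
      (measMicrostates d σ act ρ μ) (𝓝 (∫ x, f x ∂μ)) :=
  Metric.tendsto_nhds.2 fun δ hδ =>
    (measMicrostates_hasBasis d σ act ρ μ).mem_of_superset (i := (∅, {f}, ⟨δ, hδ⟩, 0)) trivial
      fun _ hq => (Real.dist_eq _ _).trans_lt (hq.2.2 f (mem_singleton_self f))

end Microstates

section Transfer

variable {G X : Type*} [Group G] [TopologicalSpace X] [CompactSpace X] {d : ℕ → ℕ}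
  {σ : ∀ i, G → Equiv.Perm (Fin (d i))} {act : G → X → X} {ρ : X → X → ℝ}

lemma comp_eval_mem_agreeSubalgebra (hσ : IsSoficApprox d σ) (hact : IsActionByHomeos G X act)
    (hρ : IsCtsPseudoMetric ρ) (hgen : IsDynGenerating act ρ) (f : C(X, ℝ)) (g : G) :
    f.comp (ContinuousMap.eval (X := fun _ => X) g) ∈ agreeSubalgebra (topMicrostates d σ act ρ)
      (fun q => phiX (σ q.1) q.2) (fun q j => PsiMap act (q.2 j)) := by
  refine Metric.tendsto_nhds.2 fun ε hε => ?_
  obtain ⟨E, C, hC, hf⟩ := hgen.exists_abs_sub_le hact.continuous hρ f (half_pos hε)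
  obtain ⟨M, hM⟩ := hρ.exists_le
  have hsofic (h : G) : Tendsto (fun q : Σ i, Fin (d i) → X =>
      prop fun k => σ q.1 (h * g⁻¹) (σ q.1 g k) ≠ σ q.1 h k) (topMicrostates d σ act ρ) (𝓝 0) := by
    have hhg := hσ.tendsto_prop_ne (h * g⁻¹) g
    rw [inv_mul_cancel_right] at hhg
    exact hhg.comp (tendsto_fst_topMicrostates d σ act ρ)
  have hrem : Tendsto (fun q : Σ i, Fin (d i) → X => C * ∑ h ∈ E,
      (rho2 ρ (fun k => act h (q.2 k)) (fun k => q.2 (σ q.1 h k)) +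
        M * prop (fun k => σ q.1 (h * g⁻¹) (σ q.1 g k) ≠ σ q.1 h k) +
        rho2 ρ (fun j => act (h * g⁻¹) (q.2 j)) (fun j => q.2 (σ q.1 (h * g⁻¹) j))))
      (topMicrostates d σ act ρ) (𝓝 0) := by
    simpa using (tendsto_finsetSum E fun h _ =>
      ((tendsto_rho2_topMicrostates d σ act ρ h).add ((hsofic h).const_mul M)).add
        (tendsto_rho2_topMicrostates d σ act ρ (h * g⁻¹))).const_mul C
  filter_upwards [hrem.eventually (gt_mem_nhds (half_pos hε))] with q hq
  rw [Real.dist_0_eq_abs, abs_of_nonneg meanAbsDev_nonneg]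
  refine (meanAbsDev_le_of_forall_abs_sub_le E (fun h a b => ρ (act h (a g)) (act h (b g)))
    (half_pos hε).le fun a b => hf (a g) (b g)).trans_lt ?_
  have hmean := sum_le_sum fun h (_ : h ∈ E) =>
    mean_le_rho2_add_mul_prop_add hρ hM act (σ q.1) q.2 g h
  simp only [phiX, PsiMap, ← hact.mul]
  linarith [mul_le_mul_of_nonneg_left hmean hC]

lemma agreeSubalgebra_topMicrostates_eq_top [TopologicalSpace.MetrizableSpace X]
    (hσ : IsSoficApprox d σ) (hact : IsActionByHomeos G X act) (hρ : IsCtsPseudoMetric ρ)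
    (hgen : IsDynGenerating act ρ) :
    agreeSubalgebra (topMicrostates d σ act ρ) (fun q => phiX (σ q.1) q.2)
      (fun q j => PsiMap act (q.2 j)) = ⊤ := by
  refine eq_top_iff.2 ?_
  rw [← ContinuousMap.subalgebra_topologicalClosure_eq_top_of_separatesPoints _
    separatesPoints_adjoin_comp_eval]
  refine Subalgebra.topologicalClosure_minimal (Algebra.adjoin_le ?_)
    (isClosed_agreeSubalgebra _ _ _)
  rintro _ ⟨⟨f, g⟩, rfl⟩
  exact comp_eval_mem_agreeSubalgebra hσ hact hρ hgen f g

lemma tendsto_mean_phiX_measMicrostates [TopologicalSpace.MetrizableSpace X] [MeasurableSpace X]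
    (hσ : IsSoficApprox d σ) (hact : IsActionByHomeos G X act) (hρ : IsCtsPseudoMetric ρ)
    (hgen : IsDynGenerating act ρ) (μ : Measure X) (p : C(G → X, ℝ)) :
    Tendsto (fun q : Σ i, Fin (d i) → X => (d q.1 : ℝ)⁻¹ * ∑ j, p (phiX (σ q.1) q.2 j))
      (measMicrostates d σ act ρ μ) (𝓝 (∫ x, p (PsiMap act x) ∂μ)) := by
  have hdev : Tendsto (fun q : Σ i, Fin (d i) → X =>
      meanAbsDev p (phiX (σ q.1) q.2) (fun j => PsiMap act (q.2 j)))
      (measMicrostates d σ act ρ μ) (𝓝 0) := by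
    have hp : p ∈ agreeSubalgebra (topMicrostates d σ act ρ) (fun q => phiX (σ q.1) q.2)
        (fun q j => PsiMap act (q.2 j)) := by
      rw [agreeSubalgebra_topMicrostates_eq_top hσ hact hρ hgen]; trivial
    exact hp.mono_left (measMicrostates_le_topMicrostates d σ act ρ μ)
  have hΨ : Continuous (PsiMap act) := continuous_pi fun g => hact.continuous g⁻¹
  simpa using (squeeze_zero_norm (fun q => abs_mean_sub_mean_le_meanAbsDev) hdev).add
    (tendsto_mean_measMicrostates d σ act ρ μ (p.comp ⟨PsiMap act, hΨ⟩))

end Transfer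

lemma integral_empDist {Z : Type*} [MeasurableSpace Z] {n : ℕ} (hn : 0 < n) (φ : Fin n → Z)
    {F : Z → ℝ} (hF : StronglyMeasurable F) :
    ∫ z, F z ∂(empDist hn φ : Measure Z) = (n : ℝ)⁻¹ * ∑ j, F (φ j) := by
  change ∫ z, F z ∂((unif n).map φ) = _
  rw [integral_map (measurable_of_fin φ).aemeasurable hF.aestronglyMeasurable, unif,
    integral_smul_measure, integral_fintype Integrable.of_finite]
  simp [measureReal_def]

end SoficPaper

open SoficPaper

theorem transfer_lemma_i_general {G X : Type*} [Group G] [Countable G]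
    [TopologicalSpace X] [CompactSpace X] [TopologicalSpace.MetrizableSpace X]
    [MeasurableSpace X] [BorelSpace X]
    (d : ℕ → ℕ) (hd : ∀ i, 0 < d i) (σ : ∀ i, G → Equiv.Perm (Fin (d i)))
    (hσ : IsSoficApprox d σ)
    (act : G → X → X) (hact : IsActionByHomeos G X act)
    (ρ : X → X → ℝ) (hρ : IsCtsPseudoMetric ρ) (hρgen : IsDynGenerating act ρ)
    (μ : MeasureTheory.Measure X) (hμProb : MeasureTheory.IsProbabilityMeasure μ)
    (hΨ : Measurable (PsiMap act)) :
    ∀ O : Set (MeasureTheory.ProbabilityMeasure (G → X)), IsOpen O →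
      pmMap μ hμProb hΨ ∈ O →
      ∃ (F : Finset G) (L : Finset C(X, ℝ)) (δ : ℝ) (I : ℕ), 0 < δ ∧
        ∀ i ≥ I, ∀ x ∈ MapMeas act ρ μ F L δ (σ i),
          empDist (hd i) (phiX (σ i) x) ∈ O := by
  intro O hO hPO
  have hconv : Tendsto (fun q : Σ i, Fin (d i) → X => empDist (hd q.1) (phiX (σ q.1) q.2))
      (measMicrostates d σ act ρ μ) (𝓝 (pmMap μ hμProb hΨ)) := by
    refine ProbabilityMeasure.tendsto_iff_forall_integral_tendsto.2 fun F => ?_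
    have hF := F.continuous.stronglyMeasurable
    simp only [integral_empDist _ _ hF]
    change Tendsto _ _ (𝓝 (∫ ω, F ω ∂(μ.map (PsiMap act))))
    rw [integral_map hΨ.aemeasurable hF.aestronglyMeasurable]
    exact tendsto_mean_phiX_measMicrostates hσ hact hρ hρgen μ F.toContinuousMap
  obtain ⟨⟨F, L, δ, I⟩, -, hsub⟩ :=
    (measMicrostates_hasBasis d σ act ρ μ).mem_iff.1 (hconv (hO.mem_nhds hPO))
  exact ⟨F, L, δ, I, δ.2, fun i hi x hx => @hsub ⟨i, x⟩ ⟨hi, hx⟩⟩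

/-- Lemma 2.7(i). Measure-theoretic microstates push forward, via
`x ↦ (φ_x)_*(u_{dᵢ})`, into any given weak* neighborhood of `Ψ_*μ`. -/
theorem transfer_lemma_i {G X : Type*} [Group G] [Countable G]
    [TopologicalSpace X] [CompactSpace X] [TopologicalSpace.MetrizableSpace X]
    [MeasurableSpace X] [BorelSpace X]
    (d : ℕ → ℕ) (hd : ∀ i, 0 < d i) (σ : ∀ i, G → Equiv.Perm (Fin (d i)))
    (hσ : IsSoficApprox d σ)
    (act : G → X → X) (hact : IsActionByHomeos G X act)
    (ρ : X → X → ℝ) (hρ : IsCtsPseudoMetric ρ) (hρgen : IsDynGenerating act ρ)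
    (μ : MeasureTheory.Measure X) (hμProb : MeasureTheory.IsProbabilityMeasure μ)
    (hμinv : ∀ g : G, MeasureTheory.Measure.map (act g) μ = μ)
    (hΨ : Measurable (PsiMap act)) :
    ∀ O : Set (MeasureTheory.ProbabilityMeasure (G → X)), IsOpen O →
      pmMap μ hμProb hΨ ∈ O →
      ∃ (F : Finset G) (L : Finset C(X, ℝ)) (δ : ℝ) (I : ℕ), 0 < δ ∧
        ∀ i ≥ I, ∀ x ∈ MapMeas act ρ μ F L δ (σ i),
          empDist (hd i) (phiX (σ i) x) ∈ O :=
  transfer_lemma_i_general d hd σ hσ act hact ρ hρ hρgen μ hμProb hΨ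
end
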